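/- Let p be an odd prime, χ the Legendre symbol modulo p, and a an integer with a ≢ 0 (mod p). Then Σ_{u mod p} χ(u² − 1) e_p(2 a u) = S(a, a; p). -/

import Mathlib

/-- `e_c(x) = exp(2πix/c)`. -/
noncomputable def ec (c : ℕ) (x : ℤ) : ℂ :=
  Complex.exp (2 * Real.pi * Complex.I * x / c)

/-- The Kloosterman sum `S(m, n; c) = Σ_{a d ≡ 1 (mod c)} e_c(a m + d n)`. -/
noncomputable def kloos (m n : ℤ) (c : ℕ) : ℂ :=
  ∑ a ∈ Finset.range c, ∑ d ∈ Finset.range c,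
    if (a * d) % c = 1 % c then ec c (a * m + d * n) else 0

/-- `G(m, m₁, m₂; c)` : complete sum of Kloosterman sums twisted by `χ_q`, for `q ∣ c`. -/
noncomputable def Gsum (q : ℕ) (m m1 m2 : ℤ) (c : ℕ) : ℂ :=
  ∑ a ∈ Finset.range c, ∑ a1 ∈ Finset.range c, ∑ a2 ∈ Finset.range c,
    (jacobiSym ((a : ℤ) * a1 * a2) q : ℂ) * kloos a ((a1 : ℤ) * a2) c *
      ec c (a * m + a1 * m1 + a2 * m2)

/-- `G'(m, m₁, m₂; c) = e_c(−m m₁ m₂) G(m, m₁, m₂; c)`. -/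
noncomputable def Gsum' (q : ℕ) (m m1 m2 : ℤ) (c : ℕ) : ℂ :=
  ec c (-(m * m1 * m2)) * Gsum q m m1 m2 c

/-- `H_r(m, m₁, m₂; q) = Σ_{u,v mod q} χ_q(v (u + v m₁)(v r − m)(u r + m m₁)) e_q(u m₂)`. -/
noncomputable def Hr (r m m1 m2 : ℤ) (q : ℕ) : ℂ :=
  ∑ u ∈ Finset.range q, ∑ v ∈ Finset.range q,
    (jacobiSym ((v : ℤ) * ((u : ℤ) + v * m1) * ((v : ℤ) * r - m) * ((u : ℤ) * r + m * m1)) q : ℂ) *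
      ec q (u * m2)

/-- `H(w; q) = Σ_{u,v mod q} χ_q(u v (u+1)(v+1)) e_q((u v − 1) w)`. -/
noncomputable def Hw (w : ℤ) (q : ℕ) : ℂ :=
  ∑ u ∈ Finset.range q, ∑ v ∈ Finset.range q,
    (jacobiSym ((u : ℤ) * v * ((u : ℤ) + 1) * ((v : ℤ) + 1)) q : ℂ) *
      ec q (((u : ℤ) * v - 1) * w)

/-- Reduced sum `H*(w; q)`, restricted by `gcd(uv − 1, q) = 1`. -/
noncomputable def Hstar (w : ℤ) (q : ℕ) : ℂ :=
  ∑ u ∈ Finset.range q, ∑ v ∈ Finset.range q,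
    if Int.gcd ((u : ℤ) * v - 1) q = 1 then
      (jacobiSym ((u : ℤ) * v * ((u : ℤ) + 1) * ((v : ℤ) + 1)) q : ℂ) *
        ec q (((u : ℤ) * v - 1) * w)
    else 0

/-- The Ramanujan sum `R(n; k) = Σ_{d mod k, (d,k)=1} e_k(d n)`. -/
noncomputable def Ram (n : ℤ) (k : ℕ) : ℂ :=
  ∑ d ∈ Finset.range k, if Nat.gcd d k = 1 then ec k (d * n) else 0

/-- The Gauss sum `τ(χ_q) = Σ_{x mod q} χ_q(x) e_q(x)`. -/
noncomputable def gaussτ (q : ℕ) : ℂ :=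
  ∑ x ∈ Finset.range q, (jacobiSym (x : ℤ) q : ℂ) * ec q (x : ℤ)

/-!
Since `χ(t) + 1` is the number of square roots of `t` and `∑ₓ ψ(2x) = 0` for a nontrivial
additive character `ψ`, the left-hand side is the sum of `ψ(2x)` over the points of the conic
`y² = x² - 1`. The linear change of variables `b = x + y`, `c = x - y` maps this conic onto the
hyperbola `b c = 1` and `2x` to `b + c`, which gives the Kloosterman sum of `ψ`; over `ZMod p`
take `ψ(x) = e_p(a x)`.
-/

open Finset

theorem ec_eq_stdAddChar (c : ℕ) [NeZero c] (x : ℤ) :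
    ec c x = ZMod.stdAddChar (x : ZMod c) := by
  rw [ZMod.stdAddChar_coe, ec]

theorem sum_range_eq_sum_zmod {M : Type*} [AddCommMonoid M] (n : ℕ) [NeZero n]
    (f : ZMod n → M) : ∑ u ∈ range n, f u = ∑ x : ZMod n, f x := by
  refine sum_nbij' (fun u => (u : ZMod n)) ZMod.val (fun _ _ => mem_univ _)
    (fun x _ => mem_range.mpr x.val_lt) (fun u hu => ZMod.val_cast_of_lt (mem_range.mp hu))
    (fun x _ => ZMod.natCast_zmod_val x) (fun _ _ => rfl)

theorem kloos_eq_sum_zmod (m n : ℤ) (c : ℕ) [NeZero c] :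
    kloos m n c = ∑ b : ZMod c, ∑ d : ZMod c,
      if b * d = 1 then ZMod.stdAddChar (b * (m : ZMod c) + d * (n : ZMod c)) else 0 := by
  set g : ZMod c → ZMod c → ℂ := fun b d =>
    if b * d = 1 then ZMod.stdAddChar (b * (m : ZMod c) + d * (n : ZMod c)) else 0
  have hterm (a d : ℕ) :
      (if a * d % c = 1 % c then ec c (a * m + d * n) else 0) = g a d := by
    have hcond : a * d % c = 1 % c ↔ (a : ZMod c) * d = 1 := by
      rw [← ZMod.natCast_eq_natCast_iff']
      push_cast
      rfl
    simp only [g, hcond, ec_eq_stdAddChar]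
    push_cast
    rfl
  rw [kloos, sum_congr rfl fun a _ => sum_congr rfl fun d _ => hterm a d,
    sum_range_eq_sum_zmod c fun b => ∑ d ∈ range c, g b d]
  exact sum_congr rfl fun b _ => sum_range_eq_sum_zmod c (g b)

section FiniteField

variable {F R : Type*} [Field F] [Fintype F]

theorem sum_sum_comp_add_sub {M : Type*} [AddCommMonoid M] (h2 : (2 : F) ≠ 0)
    (f : F → F → M) :
    ∑ x : F, ∑ y : F, f (x + y) (x - y) = ∑ b : F, ∑ c : F, f b c := by
  let e : F × F ≃ F × F :=
    { toFun := fun z => (z.1 + z.2, z.1 - z.2)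
      invFun := fun z => ((z.1 + z.2) / 2, (z.1 - z.2) / 2)
      left_inv := fun z => by ext <;> field_simp <;> ring
      right_inv := fun z => by ext <;> field_simp <;> ring }
  rw [← Fintype.sum_prod_type', ← Fintype.sum_prod_type']
  exact Fintype.sum_equiv e _ _ fun _ => rfl

variable [DecidableEq F] [CommRing R] [IsDomain R]

theorem sum_quadraticChar_sq_sub_one_mul_addChar (hF : ringChar F ≠ 2) {ψ : AddChar F R}
    (hψ : ψ ≠ 1) :
    ∑ x : F, (quadraticChar F (x ^ 2 - 1) : R) * ψ (2 * x) =
      ∑ b : F, ∑ c : F, if b * c = 1 then ψ (b + c) else 0 := by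
  have h2 : (2 : F) ≠ 0 := Ring.two_ne_zero hF
  have hsum : ∑ x : F, ψ (2 * x) = 0 := by
    rw [Fintype.sum_bijective _ (mulLeft_bijective₀ 2 h2) _ ψ fun _ => rfl]
    exact AddChar.sum_eq_zero_of_ne_one hψ
  have hcard (t : F) : (quadraticChar F t : R) + 1 = #{y : F | y ^ 2 = t} := by
    have := congrArg (Int.cast : ℤ → R) (quadraticChar_card_sqrts hF t)
    rw [Set.toFinset_ofPred] at this
    push_cast at this ⊢
    exact this.symm
  calc ∑ x : F, (quadraticChar F (x ^ 2 - 1) : R) * ψ (2 * x)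
      = ∑ x : F, ((quadraticChar F (x ^ 2 - 1) : R) + 1) * ψ (2 * x) := by
        simp only [add_mul, one_mul, sum_add_distrib, hsum, add_zero]
    _ = ∑ x : F, ∑ y : F, if y ^ 2 = x ^ 2 - 1 then ψ (2 * x) else 0 := by
        simp only [hcard, ← sum_filter, sum_const, nsmul_eq_mul]
    _ = ∑ x : F, ∑ y : F, if (x + y) * (x - y) = 1 then ψ (x + y + (x - y)) else 0 := by
        refine sum_congr rfl fun x _ => sum_congr rfl fun y _ => ?_
        congr 1
        · exact propext ⟨fun h => by linear_combination -h, fun h => by linear_combination -h⟩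
        · ring_nf
    _ = ∑ b : F, ∑ c : F, if b * c = 1 then ψ (b + c) else 0 :=
        sum_sum_comp_add_sub h2 fun b c => if b * c = 1 then ψ (b + c) else 0

end FiniteField

/-- equation (14.7): for `p` an odd prime and `a ≢ 0 (mod p)`,
`Σ_{u mod p} χ(u² − 1) e_p(2 a u) = S(a, a; p)`. -/
theorem quadratic_sum_eq_kloosterman (p : ℕ) (hp : p.Prime) (hodd : Odd p) (a : ℤ)
    (ha : ¬ (p : ℤ) ∣ a) :
    (∑ u ∈ Finset.range p, (jacobiSym ((u : ℤ) ^ 2 - 1) p : ℂ) * ec p (2 * a * u)) =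
      kloos a a p := by
  have : Fact p.Prime := ⟨hp⟩
  have hF : ringChar (ZMod p) ≠ 2 := by
    rw [ZMod.ringChar_zmod_n]
    rintro rfl
    exact Nat.not_odd_iff_even.mpr even_two hodd
  have hψ : (ZMod.stdAddChar (N := p)).mulShift a ≠ 1 :=
    ZMod.isPrimitive_stdAddChar p (by rwa [Ne, ZMod.intCast_zmod_eq_zero_iff_dvd])
  calc _ = ∑ x : ZMod p, (quadraticChar (ZMod p) (x ^ 2 - 1) : ℂ) *
          (ZMod.stdAddChar.mulShift (a : ZMod p)) (2 * x) := by
        rw [← sum_range_eq_sum_zmod]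
        refine sum_congr rfl fun u _ => ?_
        rw [← jacobiSym.legendreSym.to_jacobiSym, legendreSym, ec_eq_stdAddChar,
          AddChar.mulShift_apply]
        push_cast
        ring_nf
    _ = ∑ b : ZMod p, ∑ c : ZMod p,
          if b * c = 1 then (ZMod.stdAddChar.mulShift (a : ZMod p)) (b + c) else 0 :=
        sum_quadraticChar_sq_sub_one_mul_addChar hF hψ
    _ = kloos a a p := by
        simp only [kloos_eq_sum_zmod, AddChar.mulShift_apply, mul_comm (a : ZMod p), add_mul]
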